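/- Let A, B ∈ ℤ with 0 < A ≤ B, B ≥ 2, 2A − B = 3 and A ≠ B, let M = [[0, −B], [1, −A]] acting on ℝ², and let T be the tile for M and digits {0, …, B−1}·e₁. For digits a₁, a₂, a₃, a₄, a₁', a₂', a₃', a₄' ∈ {0, …, B−1} with a₁ − a₁' = 1 and a₂ − a₂' = A−1, the subdivision pieces T_{a₁a₂a₃a₄} and T_{a₁'a₂'a₃'a₄'} have nonempty intersection if and only if one of the following holds: (a) a₃ − a₃' = B−A, a₄ = 0 and a₄' = B−1; (b) a₃ − a₃' = B−A+1 and a₄ − a₄' ∈ {A−B, A−B−1, A−B−2}; (c) a₃ − a₃' = B−A+2 and a₄ − a₄' = 1. -/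

import Mathlib

noncomputable section

/-- The matrix `[[0, -B], [1, -A]]` as a real matrix. -/
def M' (A B : ℤ) : Matrix (Fin 2) (Fin 2) ℝ := !![0, -(B : ℝ); 1, -(A : ℝ)]

/-- `e₁ = (1, 0) ∈ ℝ²`. -/
def e1 : Fin 2 → ℝ := ![1, 0]

/-- The subdivision piece `T_{a₁…a_m} = M⁻¹(a₁e₁) + ⋯ + M^{-m}(a_m e₁) + M^{-m}·T`. -/
def subPiece (A B : ℤ) (T : Set (Fin 2 → ℝ)) {m : ℕ} (a : Fin m → ℤ) :
    Set (Fin 2 → ℝ) :=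
  (fun x => (∑ i : Fin m, ((M' A B)⁻¹ ^ ((i : ℕ) + 1)).mulVec ((a i : ℝ) • e1))
    + ((M' A B)⁻¹ ^ m).mulVec x) '' T

/-! The two pieces are images of `T` under affine maps with linear part `M⁻⁴`, so they meet iff
`T` meets `T + v` for `v = (B + a₄ - a₄', A - B + a₃ - a₃')`. Call `(p, q)` a neighbour if `T`
meets `T + (p, q)`. Applying `M` to the set equation shows that `v` is a neighbour iff some
`M v + δ e₁` with `|δ| < B` is. Along such a chain the second coordinates satisfy
`B qₖ + A qₖ₊₁ + qₖ₊₂ = δₖ`; choosing the start with `|q₀|` maximal bounds them by `3`, and a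
finite check of four steps leaves eleven neighbours. Conversely `(A - 1, 1)` and `(B + 1, 2)` are
neighbours because fixed points of compositions of two digit maps lie in `T`, and the others
follow from `(0, 0)`, single steps and the symmetry `v ↦ -v`. -/

open Matrix

def intVec (p q : ℤ) : Fin 2 → ℝ := ![(p : ℝ), q]

theorem intVec_neg (p q : ℤ) : intVec (-p) (-q) = -intVec p q := by
  ext i; fin_cases i <;> simp [intVec]

theorem det_M' (A B : ℤ) : (M' A B).det = B := by
  simp [M', det_fin_two_of]

theorem isUnit_det_M' {A B : ℤ} (hB : B ≠ 0) : IsUnit (M' A B).det := by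
  rw [det_M']
  exact isUnit_iff_ne_zero.mpr (by exact_mod_cast hB)

theorem M'_mulVec_intVec (A B p q : ℤ) : M' A B *ᵥ intVec p q = intVec (-B * q) (p - A * q) := by
  ext i
  fin_cases i <;> simp [M', intVec, mulVec, dotProduct, Fin.sum_univ_two, sub_eq_add_neg]

theorem M'_mulVec_add_intVec_add_smul_e1 (A B p q δ : ℤ) (x : Fin 2 → ℝ) :
    M' A B *ᵥ (x + intVec p q) + (δ : ℝ) • e1 = M' A B *ᵥ x + intVec (δ - B * q) (p - A * q) := by
  rw [mulVec_add, M'_mulVec_intVec, add_assoc]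
  congr 1
  ext i; fin_cases i <;> simp [intVec, e1]; ring

theorem M'_mulVec_e1 (A B : ℤ) : M' A B *ᵥ e1 = intVec 0 1 := by
  ext i; fin_cases i <;> simp [M', e1, intVec, mulVec, dotProduct]

theorem M'_sq_mulVec_e1 (A B : ℤ) : M' A B ^ 2 *ᵥ e1 = intVec (-B) (-A) := by
  rw [sq, ← mulVec_mulVec, M'_mulVec_e1, M'_mulVec_intVec]; simp

theorem M'_pow_three_mulVec_e1 (A B : ℤ) : M' A B ^ 3 *ᵥ e1 = intVec (A * B) (A ^ 2 - B) := by
  rw [pow_succ', ← mulVec_mulVec, M'_sq_mulVec_e1, M'_mulVec_intVec]; ring_nf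

theorem M'_sq (A B : ℤ) : M' A B ^ 2 = !![-(B : ℝ), A * B; -A, A ^ 2 - B] := by
  ext i j
  fin_cases i <;> fin_cases j <;> simp [sq, M', mul_apply, Fin.sum_univ_two] <;> ring

theorem M'_sq_mulVec_intVec (A B p q : ℤ) :
    M' A B ^ 2 *ᵥ intVec p q = intVec (-B * (p - A * q)) (-B * q - A * (p - A * q)) := by
  rw [sq, ← mulVec_mulVec, M'_mulVec_intVec, M'_mulVec_intVec]

theorem det_M'_sq_sub_one (A B : ℤ) :
    (M' A B ^ 2 - 1).det = ((B : ℝ) + 1) ^ 2 - (A : ℝ) ^ 2 := by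
  rw [det_fin_two]
  simp [M'_sq]
  ring

theorem M'_pow_mul_inv_pow {A B : ℤ} (hB : B ≠ 0) {k n : ℕ} (hkn : k ≤ n) :
    M' A B ^ n * (M' A B)⁻¹ ^ k = M' A B ^ (n - k) := by
  rw [inv_pow', ← Nat.sub_add_cancel hkn, pow_add, Nat.add_sub_cancel, mul_assoc,
    mul_nonsing_inv _ (by rw [det_pow]; exact (isUnit_det_M' hB).pow k), mul_one]

theorem M'_pow_mulVec_digit_sum_add {A B : ℤ} (hB : B ≠ 0) {m : ℕ} (a : Fin m → ℤ)
    (x : Fin 2 → ℝ) :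
    M' A B ^ m *ᵥ (∑ i : Fin m, ((M' A B)⁻¹ ^ ((i : ℕ) + 1)) *ᵥ ((a i : ℝ) • e1)
      + ((M' A B)⁻¹ ^ m) *ᵥ x)
      = ∑ i : Fin m, (a i : ℝ) • (M' A B ^ (i.rev : ℕ) *ᵥ e1) + x := by
  simp only [mulVec_add, mulVec_sum, mulVec_mulVec, M'_pow_mul_inv_pow hB le_rfl,
    M'_pow_mul_inv_pow hB (Nat.succ_le_of_lt (Fin.is_lt _)), Nat.sub_self, pow_zero, one_mulVec,
    mulVec_smul, Fin.val_rev]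

theorem subPiece_inter_nonempty_iff {A B : ℤ} (hB : B ≠ 0) (T : Set (Fin 2 → ℝ)) {m : ℕ}
    (a a' : Fin m → ℤ) :
    (subPiece A B T a ∩ subPiece A B T a').Nonempty ↔
      ∃ x ∈ T, x + ∑ i : Fin m, ((a i - a' i : ℤ) : ℝ) • (M' A B ^ (i.rev : ℕ) *ᵥ e1) ∈ T := by
  have hinj := mulVec_injective_of_isUnit
    ((M' A B ^ m).isUnit_iff_isUnit_det.mpr (by rw [det_pow]; exact (isUnit_det_M' hB).pow m))
  have key : ∀ x y : Fin 2 → ℝ,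
      (∑ i : Fin m, ((M' A B)⁻¹ ^ ((i : ℕ) + 1)) *ᵥ ((a i : ℝ) • e1) + ((M' A B)⁻¹ ^ m) *ᵥ x =
        ∑ i : Fin m, ((M' A B)⁻¹ ^ ((i : ℕ) + 1)) *ᵥ ((a' i : ℝ) • e1) + ((M' A B)⁻¹ ^ m) *ᵥ y) ↔
      y = x + ∑ i : Fin m, ((a i - a' i : ℤ) : ℝ) • (M' A B ^ (i.rev : ℕ) *ᵥ e1) := by
    intro x y
    rw [← hinj.eq_iff, M'_pow_mulVec_digit_sum_add hB, M'_pow_mulVec_digit_sum_add hB]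
    simp only [Int.cast_sub, sub_smul, Finset.sum_sub_distrib]
    constructor
    · intro h
      rw [← add_right_inj (∑ i : Fin m, (a' i : ℝ) • (M' A B ^ (i.rev : ℕ) *ᵥ e1)), ← h]
      abel
    · rintro rfl
      abel
  constructor
  · rintro ⟨_, ⟨x, hx, rfl⟩, ⟨y, hy, hxy⟩⟩
    exact ⟨x, hx, (key x y).mp hxy.symm ▸ hy⟩
  · rintro ⟨x, hx, hy⟩
    exact ⟨_, ⟨x, hx, rfl⟩, ⟨_, hy, ((key x _).mpr rfl).symm⟩⟩

def IsNeighbor (T : Set (Fin 2 → ℝ)) (p q : ℤ) : Prop := ∃ x ∈ T, x + intVec p q ∈ T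

theorem IsNeighbor.neg {T : Set (Fin 2 → ℝ)} {p q : ℤ} (h : IsNeighbor T p q) :
    IsNeighbor T (-p) (-q) := by
  obtain ⟨x, hx, hxv⟩ := h
  exact ⟨x + intVec p q, hxv, by rwa [intVec_neg, add_neg_cancel_right]⟩

theorem subPiece_four_inter_nonempty_iff {A B : ℤ} (hB : B ≠ 0) (T : Set (Fin 2 → ℝ))
    {a₁ a₂ a₃ a₄ a₁' a₂' a₃' a₄' : ℤ} (hd1 : a₁ - a₁' = 1) (hd2 : a₂ - a₂' = A - 1) :
    (subPiece A B T ![a₁, a₂, a₃, a₄] ∩ subPiece A B T ![a₁', a₂', a₃', a₄']).Nonempty ↔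
      IsNeighbor T (B + (a₄ - a₄')) (A - B + (a₃ - a₃')) := by
  have hsum : ∑ i : Fin 4, ((![a₁, a₂, a₃, a₄] i - ![a₁', a₂', a₃', a₄'] i : ℤ) : ℝ) •
      (M' A B ^ (i.rev : ℕ) *ᵥ e1) = intVec (B + (a₄ - a₄')) (A - B + (a₃ - a₃')) := by
    rw [Fin.sum_univ_four]
    change ((a₁ - a₁' : ℤ) : ℝ) • (M' A B ^ 3 *ᵥ e1) + ((a₂ - a₂' : ℤ) : ℝ) • (M' A B ^ 2 *ᵥ e1)
      + ((a₃ - a₃' : ℤ) : ℝ) • (M' A B ^ 1 *ᵥ e1) + ((a₄ - a₄' : ℤ) : ℝ) • (M' A B ^ 0 *ᵥ e1) = _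
    rw [hd1, hd2, M'_pow_three_mulVec_e1, M'_sq_mulVec_e1, pow_one, M'_mulVec_e1, pow_zero,
      one_mulVec]
    ext i
    fin_cases i <;> simp [intVec, e1] <;> ring
  rw [subPiece_inter_nonempty_iff hB, hsum, IsNeighbor]

section Step

variable {A B : ℤ} {T : Set (Fin 2 → ℝ)}
  (hT : (M' A B).mulVec '' T = ⋃ j ∈ Set.Icc (0 : ℤ) (B - 1), (fun x => x + (j : ℝ) • e1) '' T)
include hT

theorem exists_mulVec_eq_add_digit {x : Fin 2 → ℝ} (hx : x ∈ T) :
    ∃ j ∈ Set.Icc (0 : ℤ) (B - 1), ∃ y ∈ T, M' A B *ᵥ x = y + (j : ℝ) • e1 := by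
  have h : M' A B *ᵥ x ∈ (M' A B).mulVec '' T := ⟨x, hx, rfl⟩
  simp only [hT, Set.mem_iUnion, Set.mem_image] at h
  obtain ⟨j, hj, y, hy, hxy⟩ := h
  exact ⟨j, hj, y, hy, hxy.symm⟩

theorem exists_mem_mulVec_eq_add_digit {y : Fin 2 → ℝ} (hy : y ∈ T) {j : ℤ}
    (hj : j ∈ Set.Icc (0 : ℤ) (B - 1)) : ∃ z ∈ T, M' A B *ᵥ z = y + (j : ℝ) • e1 := by
  have h : y + (j : ℝ) • e1 ∈ (M' A B).mulVec '' T := by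
    rw [hT]
    exact Set.mem_biUnion hj ⟨y, hy, rfl⟩
  exact h

theorem isNeighbor_iff_exists_step (hB : B ≠ 0) {p q : ℤ} :
    IsNeighbor T p q ↔ ∃ δ : ℤ, |δ| ≤ B - 1 ∧ IsNeighbor T (δ - B * q) (p - A * q) := by
  constructor
  · rintro ⟨x, hx, hxv⟩
    obtain ⟨j, hj, y, hy, hMx⟩ := exists_mulVec_eq_add_digit hT hx
    obtain ⟨j', hj', y', hy', hMxv⟩ := exists_mulVec_eq_add_digit hT hxv
    rw [Set.mem_Icc] at hj hj'
    refine ⟨j - j', abs_le.mpr ⟨by omega, by omega⟩, y, hy, ?_⟩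
    have key := M'_mulVec_add_intVec_add_smul_e1 A B p q (j - j') x
    rw [hMx, hMxv] at key
    push_cast at key
    convert hy' using 1
    linear_combination (norm := module) -key
  · rintro ⟨δ, hδ, y, hy, hyv⟩
    obtain ⟨hδl, hδr⟩ := abs_le.mp hδ
    obtain ⟨z, hz, hMz⟩ := exists_mem_mulVec_eq_add_digit hT hy
      (j := max δ 0) (Set.mem_Icc.mpr ⟨by omega, by omega⟩)
    obtain ⟨z', hz', hMz'⟩ := exists_mem_mulVec_eq_add_digit hT hyv
      (j := max δ 0 - δ) (Set.mem_Icc.mpr ⟨by omega, by omega⟩)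
    refine ⟨z, hz, ?_⟩
    convert hz' using 1
    apply mulVec_injective_of_isUnit ((M' A B).isUnit_iff_isUnit_det.mpr (isUnit_det_M' hB))
    rw [← add_left_inj ((δ : ℝ) • e1), M'_mulVec_add_intVec_add_smul_e1, hMz, hMz']
    push_cast
    module

end Step

/-- In the coordinates `(p, q) = (q₁ + A q₀, q₀)` the step `v ↦ M v + δ e₁` between neighbours
becomes the shift `(q₀, q₁) ↦ (q₁, q₂)` with `δ = B q₀ + A q₁ + q₂`. -/
theorem isNeighbor_iff_exists_next {A B : ℤ} {T : Set (Fin 2 → ℝ)}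
    (hT : (M' A B).mulVec '' T = ⋃ j ∈ Set.Icc (0 : ℤ) (B - 1), (fun x => x + (j : ℝ) • e1) '' T)
    (hB : B ≠ 0) {q₀ q₁ : ℤ} :
    IsNeighbor T (q₁ + A * q₀) q₀ ↔
      ∃ q₂ : ℤ, |B * q₀ + A * q₁ + q₂| ≤ B - 1 ∧ IsNeighbor T (q₂ + A * q₁) q₁ := by
  rw [isNeighbor_iff_exists_step hT hB]
  constructor
  · rintro ⟨δ, hδ, h⟩
    refine ⟨δ - B * q₀ - A * q₁, ?_, by convert h using 2 <;> ring⟩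
    rwa [show B * q₀ + A * q₁ + (δ - B * q₀ - A * q₁) = δ by ring]
  · rintro ⟨q₂, hq₂, h⟩
    refine ⟨B * q₀ + A * q₁ + q₂, hq₂, ?_⟩
    convert h using 2 <;> ring

theorem IsNeighbor.exists_max_abs_snd {T : Set (Fin 2 → ℝ)} (hTcp : IsCompact T)
    {p q : ℤ} (h : IsNeighbor T p q) :
    ∃ p₀ q₀ : ℤ, IsNeighbor T p₀ q₀ ∧ ∀ p q : ℤ, IsNeighbor T p q → |q| ≤ |q₀| := by
  obtain ⟨R, hR⟩ := hTcp.isBounded.exists_norm_le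
  have hbdd : ∀ p q : ℤ, IsNeighbor T p q → |q| ≤ ⌈2 * R⌉ := by
    rintro p q ⟨x, hx, hxv⟩
    have hq : (q : ℝ) = (x + intVec p q) 1 - x 1 := by simp [intVec]
    have : |(q : ℝ)| ≤ 2 * R := by
      rw [hq]
      calc |(x + intVec p q) 1 - x 1| ≤ ‖(x + intVec p q) 1‖ + ‖x 1‖ := abs_sub _ _
        _ ≤ ‖x + intVec p q‖ + ‖x‖ := add_le_add (norm_le_pi_norm _ 1) (norm_le_pi_norm _ 1)
        _ ≤ 2 * R := by linarith [hR _ hx, hR _ hxv]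
    exact_mod_cast this.trans (Int.le_ceil _)
  obtain ⟨c, ⟨p₀, q₀, h₀, rfl⟩, hmax⟩ := Int.exists_greatest_of_bdd
    (P := fun c => ∃ p q : ℤ, IsNeighbor T p q ∧ |q| = c)
    ⟨⌈2 * R⌉, by rintro _ ⟨p, q, h, rfl⟩; exact hbdd p q h⟩ ⟨_, p, q, h, rfl⟩
  exact ⟨p₀, q₀, h₀, fun p q h => hmax _ ⟨p, q, h, rfl⟩⟩

/-- With `δₖ = B qₖ + A qₖ₊₁ + qₖ₊₂`, eliminating `q₁` gives
`B² q₀ = B δ₀ - A δ₁ + (A² - B) q₂ + A q₃`, so a maximal `|q₀|` is at most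
`(A + B)(B - 1) / ((B - A)(A + B + 1)) < 4`. -/
theorem abs_le_three_of_recurrence {A B q₀ q₁ q₂ q₃ : ℤ} (hA : 4 ≤ A) (hB : B = 2 * A - 3)
    (h₂ : |q₂| ≤ |q₀|) (h₃ : |q₃| ≤ |q₀|)
    (h₀₁₂ : |B * q₀ + A * q₁ + q₂| ≤ B - 1) (h₁₂₃ : |B * q₁ + A * q₂ + q₃| ≤ B - 1) :
    |q₀| ≤ 3 := by
  have hA₀ : 0 ≤ A := by omega
  have hB₀ : 0 ≤ B := by omega
  have hAB : 0 ≤ A * A - B := by nlinarith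
  have key : B * B * |q₀| ≤ B * (B - 1) + A * (B - 1) + (A * A - B) * |q₀| + A * |q₀| :=
    calc B * B * |q₀|
        = |B * (B * q₀ + A * q₁ + q₂) - A * (B * q₁ + A * q₂ + q₃) + (A * A - B) * q₂
            + A * q₃| := by
          rw [← abs_of_nonneg (mul_self_nonneg B), ← abs_mul]; ring_nf
      _ ≤ |B * (B * q₀ + A * q₁ + q₂)| + |A * (B * q₁ + A * q₂ + q₃)| + |(A * A - B) * q₂|
          + |A * q₃| :=
          (abs_add_le _ _).trans (add_le_add ((abs_add_le _ _).trans
            (add_le_add (abs_sub _ _) le_rfl)) le_rfl)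
      _ = B * |B * q₀ + A * q₁ + q₂| + A * |B * q₁ + A * q₂ + q₃| + (A * A - B) * |q₂|
          + A * |q₃| := by
          simp only [abs_mul, abs_of_nonneg hA₀, abs_of_nonneg hB₀, abs_of_nonneg hAB]
      _ ≤ B * (B - 1) + A * (B - 1) + (A * A - B) * |q₀| + A * |q₀| := by gcongr
  subst hB
  by_contra! hc
  nlinarith [mul_le_mul_of_nonneg_left (show 4 ≤ |q₀| by omega)
    (by nlinarith : (0 : ℤ) ≤ 3 * A * A - 11 * A + 6), mul_nonneg (by omega : 0 ≤ A - 4) hA₀]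

theorem recurrence_cases {A B q₀ q₁ q₂ q₃ q₄ : ℤ} (hA : 4 ≤ A) (hB : B = 2 * A - 3)
    (b₀ : |q₀| ≤ 3) (b₁ : |q₁| ≤ 3) (b₂ : |q₂| ≤ 3) (b₃ : |q₃| ≤ 3) (b₄ : |q₄| ≤ 3)
    (h₀₁₂ : |B * q₀ + A * q₁ + q₂| ≤ B - 1) (h₁₂₃ : |B * q₁ + A * q₂ + q₃| ≤ B - 1)
    (h₂₃₄ : |B * q₂ + A * q₃ + q₄| ≤ B - 1) :
    (q₀ = 0 ∧ -1 ≤ q₁ ∧ q₁ ≤ 1) ∨ (q₀ = 1 ∧ -2 ≤ q₁ ∧ q₁ ≤ 0) ∨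
      (q₀ = -1 ∧ 0 ≤ q₁ ∧ q₁ ≤ 2) ∨ (q₀ = 2 ∧ q₁ = -2) ∨ (q₀ = -2 ∧ q₁ = 2) := by
  subst hB
  rw [abs_le] at b₀ b₁ b₂ b₃ b₄ h₀₁₂ h₁₂₃ h₂₃₄
  obtain ⟨b₀l, b₀r⟩ := b₀
  obtain ⟨b₁l, b₁r⟩ := b₁
  obtain ⟨b₂l, b₂r⟩ := b₂
  obtain ⟨b₃l, b₃r⟩ := b₃
  interval_cases q₀ <;> interval_cases q₁ <;> first
    | omega
    | interval_cases q₂ <;> first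
      | omega
      | interval_cases q₃ <;> omega

section Neighbors

variable {A B : ℤ} {T : Set (Fin 2 → ℝ)} (hA : 4 ≤ A) (hB : B = 2 * A - 3)
  (hT : (M' A B).mulVec '' T = ⋃ j ∈ Set.Icc (0 : ℤ) (B - 1), (fun x => x + (j : ℝ) • e1) '' T)
include hA hB hT

theorem IsNeighbor.abs_snd_le_three (hTcp : IsCompact T) {p q : ℤ} (h : IsNeighbor T p q) :
    |q| ≤ 3 := by
  obtain ⟨p₀, q₀, h₀, hmax⟩ := IsNeighbor.exists_max_abs_snd hTcp h
  have hB₀ : B ≠ 0 := by omega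
  rw [show p₀ = (p₀ - A * q₀) + A * q₀ by ring] at h₀
  obtain ⟨q₂, h₀₁₂, h₁⟩ := (isNeighbor_iff_exists_next hT hB₀).mp h₀
  obtain ⟨q₃, h₁₂₃, h₂⟩ := (isNeighbor_iff_exists_next hT hB₀).mp h₁
  obtain ⟨_, -, h₃⟩ := (isNeighbor_iff_exists_next hT hB₀).mp h₂
  exact (hmax p q h).trans
    (abs_le_three_of_recurrence hA hB (hmax _ _ h₂) (hmax _ _ h₃) h₀₁₂ h₁₂₃)

theorem IsNeighbor.cases (hTcp : IsCompact T) {q₀ q₁ : ℤ} (h₀ : IsNeighbor T (q₁ + A * q₀) q₀) :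
    (q₀ = 0 ∧ -1 ≤ q₁ ∧ q₁ ≤ 1) ∨ (q₀ = 1 ∧ -2 ≤ q₁ ∧ q₁ ≤ 0) ∨
      (q₀ = -1 ∧ 0 ≤ q₁ ∧ q₁ ≤ 2) ∨ (q₀ = 2 ∧ q₁ = -2) ∨ (q₀ = -2 ∧ q₁ = 2) := by
  have hB₀ : B ≠ 0 := by omega
  obtain ⟨q₂, h₀₁₂, h₁⟩ := (isNeighbor_iff_exists_next hT hB₀).mp h₀
  obtain ⟨q₃, h₁₂₃, h₂⟩ := (isNeighbor_iff_exists_next hT hB₀).mp h₁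
  obtain ⟨q₄, h₂₃₄, h₃⟩ := (isNeighbor_iff_exists_next hT hB₀).mp h₂
  obtain ⟨_, -, h₄⟩ := (isNeighbor_iff_exists_next hT hB₀).mp h₃
  have bound := fun {p q : ℤ} (h : IsNeighbor T p q) => h.abs_snd_le_three hA hB hT hTcp
  exact recurrence_cases hA hB (bound h₀) (bound h₁) (bound h₂) (bound h₃) (bound h₄)
    h₀₁₂ h₁₂₃ h₂₃₄

end Neighbors

/-- The weight `2` makes `M⁻²` a contraction when `B = 2A - 3`; for `A = 4` the plain sup norm is
not contracted. -/
def weightedNorm (u : Fin 2 → ℝ) : ℝ := max |u 0| (2 * |u 1|)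

theorem norm_le_weightedNorm (u : Fin 2 → ℝ) : ‖u‖ ≤ weightedNorm u := by
  refine (pi_norm_le_iff_of_nonneg ((abs_nonneg _).trans (le_max_left _ _))).mpr fun i => ?_
  rw [Real.norm_eq_abs]
  fin_cases i
  · exact le_max_left _ _
  · exact (le_mul_of_one_le_left (abs_nonneg _) one_le_two).trans (le_max_right _ _)

theorem abs_mul_sub_mul_le {a b : ℝ} (ha : 0 ≤ a) (hb : 0 ≤ b) (x y : ℝ) :
    |a * x - b * y| ≤ a * |x| + b * |y| := by
  simpa only [abs_mul, abs_of_nonneg ha, abs_of_nonneg hb] using abs_sub (a * x) (b * y)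

theorem weightedNorm_le_of_sq_mulVec {A B : ℤ} (hA : 4 ≤ A) (hB : B = 2 * A - 3)
    {u w : Fin 2 → ℝ} (h : M' A B ^ 2 *ᵥ u = w) : weightedNorm u ≤ 9 / 10 * weightedNorm w := by
  have hu₀ : (A ^ 2 - B) * w 0 - A * B * w 1 = B ^ 2 * u 0 := by
    simp only [← h, M'_sq, mulVec, dotProduct, Fin.sum_univ_two, of_apply, cons_val', cons_val_zero,
      cons_val_one, empty_val', cons_val_fin_one]; ring
  have hu₁ : A * w 0 - B * w 1 = B ^ 2 * u 1 := by
    simp only [← h, M'_sq, mulVec, dotProduct, Fin.sum_univ_two, of_apply, cons_val', cons_val_zero,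
      cons_val_one, empty_val', cons_val_fin_one]; ring
  have hA' : (4 : ℝ) ≤ A := by exact_mod_cast hA
  have hB' : (B : ℝ) = 2 * A - 3 := by exact_mod_cast hB
  have hB₀ : (0 : ℝ) < B ^ 2 := by rw [hB']; nlinarith
  have hAB : (0 : ℝ) ≤ A ^ 2 - B := by rw [hB']; nlinarith
  have hW₀ : |w 0| ≤ weightedNorm w := le_max_left _ _
  have hW₁ : 2 * |w 1| ≤ weightedNorm w := le_max_right _ _
  have hW : 0 ≤ weightedNorm w := (abs_nonneg _).trans hW₀
  apply max_le <;> refine le_of_mul_le_mul_left ?_ hB₀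
  · calc (B : ℝ) ^ 2 * |u 0| = |(A ^ 2 - B) * w 0 - A * B * w 1| := by
          rw [hu₀, abs_mul, abs_of_pos hB₀]
      _ ≤ (A ^ 2 - B) * |w 0| + A * B * |w 1| := abs_mul_sub_mul_le hAB (by nlinarith) _ _
      _ ≤ B ^ 2 * (9 / 10 * weightedNorm w) := by
          rw [hB'] at hAB ⊢
          nlinarith [mul_le_mul_of_nonneg_left hW₀ hAB,
            mul_le_mul_of_nonneg_left hW₁ (by nlinarith : (0 : ℝ) ≤ A * (2 * A - 3)),
            mul_nonneg hW (by nlinarith : (0 : ℝ) ≤ 16 * A ^ 2 - 73 * A + 51)]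
  · calc (B : ℝ) ^ 2 * (2 * |u 1|) = 2 * |A * w 0 - B * w 1| := by
          rw [hu₁, abs_mul, abs_of_pos hB₀]; ring
      _ ≤ 2 * (A * |w 0| + B * |w 1|) := by
          gcongr; exact abs_mul_sub_mul_le (by linarith) (by linarith) _ _
      _ ≤ B ^ 2 * (9 / 10 * weightedNorm w) := by
          rw [hB']
          nlinarith [mul_le_mul_of_nonneg_left hW₀ (by linarith : (0 : ℝ) ≤ A),
            mul_le_mul_of_nonneg_left hW₁ (by linarith : (0 : ℝ) ≤ 2 * A - 3),
            mul_nonneg hW (by nlinarith : (0 : ℝ) ≤ 36 * A ^ 2 - 128 * A + 96)]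

section Attractor

variable {A B : ℤ} {T : Set (Fin 2 → ℝ)} (hA : 4 ≤ A) (hB : B = 2 * A - 3)
  (hT : (M' A B).mulVec '' T = ⋃ j ∈ Set.Icc (0 : ℤ) (B - 1), (fun x => x + (j : ℝ) • e1) '' T)
  (hTne : T.Nonempty) (hTcl : IsClosed T)
include hA hB hT hTne hTcl

/-- The fixed point of `y ↦ M⁻¹(M⁻¹(y + j₂ e₁) + j₁ e₁)` lies in `T`: the iterates of this
contraction, started in `T`, stay in `T` and converge to it. -/
theorem mem_of_sq_mulVec_eq {j₁ j₂ : ℤ} (hj₁ : j₁ ∈ Set.Icc (0 : ℤ) (B - 1))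
    (hj₂ : j₂ ∈ Set.Icc (0 : ℤ) (B - 1)) {x : Fin 2 → ℝ}
    (hx : M' A B ^ 2 *ᵥ x = x + ((j₂ : ℝ) • e1 + (j₁ : ℝ) • (M' A B *ᵥ e1))) : x ∈ T := by
  set c := (j₂ : ℝ) • e1 + (j₁ : ℝ) • (M' A B *ᵥ e1)
  have pull : ∀ y ∈ T, ∃ z ∈ T, M' A B ^ 2 *ᵥ z = y + c := by
    intro y hy
    obtain ⟨z₁, hz₁, hMz₁⟩ := exists_mem_mulVec_eq_add_digit hT hy hj₂
    obtain ⟨z, hz, hMz⟩ := exists_mem_mulVec_eq_add_digit hT hz₁ hj₁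
    refine ⟨z, hz, ?_⟩
    rw [sq, ← mulVec_mulVec, hMz, mulVec_add, hMz₁, mulVec_smul, add_assoc]
  choose! f hfT hf using pull
  have hmaps : Set.MapsTo f T T := hfT
  obtain ⟨y, hy⟩ := hTne
  have hdist : ∀ n, weightedNorm (f^[n] y - x) ≤ (9 / 10) ^ n * weightedNorm (y - x) := by
    intro n
    induction n with
    | zero => simp
    | succ n ih =>
      have hstep : M' A B ^ 2 *ᵥ (f^[n + 1] y - x) = f^[n] y - x := by
        rw [Function.iterate_succ_apply', mulVec_sub, hf _ (hmaps.iterate n hy), hx]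
        abel
      calc weightedNorm (f^[n + 1] y - x) ≤ 9 / 10 * weightedNorm (f^[n] y - x) :=
            weightedNorm_le_of_sq_mulVec hA hB hstep
        _ ≤ 9 / 10 * ((9 / 10) ^ n * weightedNorm (y - x)) := by gcongr
        _ = (9 / 10) ^ (n + 1) * weightedNorm (y - x) := by ring
  have hlim : Filter.Tendsto (fun n => f^[n] y) Filter.atTop (nhds x) := by
    rw [tendsto_iff_norm_sub_tendsto_zero]
    refine squeeze_zero (fun _ => norm_nonneg _)
      (fun n => (norm_le_weightedNorm _).trans (hdist n)) ?_
    simpa using (tendsto_pow_atTop_nhds_zero_of_lt_one (by norm_num) (by norm_num)).mul_const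
      (weightedNorm (y - x))
  exact hTcl.mem_of_tendsto hlim (Filter.Eventually.of_forall fun n => hmaps.iterate n hy)

/-- The fixed points for the digit pairs `(j, 0)` and `(0, j)` differ by `(p, q)`. -/
theorem isNeighbor_of_sq_mulVec_intVec {j : ℤ} (hj : j ∈ Set.Icc (0 : ℤ) (B - 1)) {p q : ℤ}
    (h : M' A B ^ 2 *ᵥ intVec p q = intVec (p + j) (q - j)) : IsNeighbor T p q := by
  have hunit : IsUnit (M' A B ^ 2 - 1) := by
    rw [isUnit_iff_isUnit_det, isUnit_iff_ne_zero, det_M'_sq_sub_one,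
      show (B : ℝ) = 2 * A - 3 by exact_mod_cast hB]
    have hA' : (4 : ℝ) ≤ A := by exact_mod_cast hA
    exact ne_of_gt (by nlinarith)
  obtain ⟨x, hx⟩ := mulVec_surjective_iff_isUnit.mpr hunit ((j : ℝ) • (M' A B *ᵥ e1))
  rw [sub_mulVec, one_mulVec, sub_eq_iff_eq_add'] at hx
  refine ⟨x, mem_of_sq_mulVec_eq hA hB hT hTne hTcl hj (j₂ := 0) ⟨le_rfl, by omega⟩ ?_,
    mem_of_sq_mulVec_eq hA hB hT hTne hTcl (j₁ := 0) ⟨le_rfl, by omega⟩ hj ?_⟩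
  · rw [hx]; simp
  · rw [mulVec_add, hx, h, M'_mulVec_e1]
    ext i; fin_cases i <;> simp [intVec, e1, add_assoc]

theorem isNeighbor_A_sub_one_one : IsNeighbor T (A - 1) 1 :=
  isNeighbor_of_sq_mulVec_intVec hA hB hT hTne hTcl (j := A - 2) ⟨by omega, by omega⟩
    (by rw [M'_sq_mulVec_intVec]; subst hB; ring_nf)

theorem isNeighbor_B_add_one_two : IsNeighbor T (B + 1) 2 :=
  isNeighbor_of_sq_mulVec_intVec hA hB hT hTne hTcl (j := B - 1) ⟨by omega, by omega⟩
    (by rw [M'_sq_mulVec_intVec]; subst hB; ring_nf)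

end Attractor

theorem isNeighbor_iff {A B : ℤ} {T : Set (Fin 2 → ℝ)} (hA : 4 ≤ A) (hB : B = 2 * A - 3)
    (hT : (M' A B).mulVec '' T = ⋃ j ∈ Set.Icc (0 : ℤ) (B - 1), (fun x => x + (j : ℝ) • e1) '' T)
    (hTne : T.Nonempty) (hTcp : IsCompact T) {p q : ℤ} :
    IsNeighbor T p q ↔ (q = 0 ∧ -1 ≤ p ∧ p ≤ 1) ∨ (q = 1 ∧ A - 2 ≤ p ∧ p ≤ A) ∨
      (q = -1 ∧ -A ≤ p ∧ p ≤ 2 - A) ∨ (q = 2 ∧ p = B + 1) ∨ (q = -2 ∧ p = -(B + 1)) := by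
  constructor
  · intro h
    rw [show p = (p - A * q) + A * q by ring] at h
    rcases h.cases hA hB hT hTcp with ⟨rfl, h⟩ | ⟨rfl, h⟩ | ⟨rfl, h⟩ | ⟨rfl, h⟩ | ⟨rfl, h⟩ <;>
      omega
  intro h
  have back {p q : ℤ} (δ : ℤ) (hδ : |δ| ≤ B - 1) (h : IsNeighbor T (δ - B * q) (p - A * q)) :
      IsNeighbor T p q :=
    (isNeighbor_iff_exists_step hT (by omega)).mpr ⟨δ, hδ, h⟩
  have n₀ : IsNeighbor T 0 0 := by
    obtain ⟨x, hx⟩ := hTne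
    refine ⟨x, hx, ?_⟩
    rwa [show intVec 0 0 = 0 by ext i; fin_cases i <;> simp [intVec], add_zero]
  have n₁ := isNeighbor_A_sub_one_one hA hB hT hTne hTcp.isClosed
  have n₂ := isNeighbor_B_add_one_two hA hB hT hTne hTcp.isClosed
  have n₃ : IsNeighbor T 1 0 := back (A - 1) (abs_le.mpr ⟨by omega, by omega⟩) (by simpa using n₁)
  have n₄ : IsNeighbor T A 1 := back (B - 1) (abs_le.mpr ⟨by omega, by omega⟩)
    (by convert n₃.neg using 2 <;> ring)
  have n₅ : IsNeighbor T (A - 2) 1 := back (-1) (abs_le.mpr ⟨by omega, by omega⟩)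
    (by convert n₂.neg using 2 <;> ring)
  rcases h with ⟨rfl, hp⟩ | ⟨rfl, hp⟩ | ⟨rfl, hp⟩ | ⟨rfl, rfl⟩ | ⟨rfl, rfl⟩
  · obtain rfl | rfl | rfl : p = -1 ∨ p = 0 ∨ p = 1 := by omega
    exacts [by simpa using n₃.neg, n₀, n₃]
  · obtain rfl | rfl | rfl : p = A - 2 ∨ p = A - 1 ∨ p = A := by omega
    exacts [n₅, n₁, n₄]
  · obtain rfl | rfl | rfl : p = -A ∨ p = 1 - A ∨ p = 2 - A := by omega
    exacts [n₄.neg, by simpa using n₁.neg, by simpa using n₅.neg]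
  · exact n₂
  · exact n₂.neg

theorem subPiece_four_inter_Aminus1_general
    (A B : ℤ) (hAB : A ≤ B)
    (h3 : 2 * A - B = 3) (hABne : A ≠ B)
    (T : Set (Fin 2 → ℝ)) (hTne : T.Nonempty) (hTcp : IsCompact T)
    (hT : (M' A B).mulVec '' T =
      ⋃ j ∈ Set.Icc (0 : ℤ) (B - 1), (fun x => x + (j : ℝ) • e1) '' T)
    (a₁ a₂ a₃ a₄ a₁' a₂' a₃' a₄' : ℤ)
    (ha₄ : a₄ ∈ Set.Icc (0 : ℤ) (B - 1))
    (ha₄' : a₄' ∈ Set.Icc (0 : ℤ) (B - 1))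
    (hd1 : a₁ - a₁' = 1) (hd2 : a₂ - a₂' = A - 1) :
    (subPiece A B T ![a₁, a₂, a₃, a₄] ∩ subPiece A B T ![a₁', a₂', a₃', a₄']).Nonempty ↔
      ((a₃ - a₃' = B - A ∧ a₄ = 0 ∧ a₄' = B - 1) ∨
       (a₃ - a₃' = B - A + 1 ∧
         (a₄ - a₄' = A - B ∨ a₄ - a₄' = A - B - 1 ∨ a₄ - a₄' = A - B - 2)) ∨
       (a₃ - a₃' = B - A + 2 ∧ a₄ - a₄' = 1)) := by
  have hA₄ : 4 ≤ A := by omega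
  have hBA : B = 2 * A - 3 := by omega
  rw [subPiece_four_inter_nonempty_iff (by omega) T hd1 hd2, isNeighbor_iff hA₄ hBA hT hTne hTcp]
  rw [Set.mem_Icc] at ha₄ ha₄'
  omega

/-- For `0 < A ≤ B`, `B ≥ 2`, `2A - B = 3`, `A ≠ B`, and digits
with `a₁ - a₁' = 1` and `a₂ - a₂' = A - 1`, the pieces `T_{a₁a₂a₃a₄}` and
`T_{a₁'a₂'a₃'a₄'}` intersect iff one of three digit constellations holds. -/
theorem subPiece_four_inter_Aminus1
    (A B : ℤ) (hA : 0 < A) (hAB : A ≤ B) (hB : 2 ≤ B)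
    (h3 : 2 * A - B = 3) (hABne : A ≠ B)
    (T : Set (Fin 2 → ℝ)) (hTne : T.Nonempty) (hTcp : IsCompact T)
    (hT : (M' A B).mulVec '' T =
      ⋃ j ∈ Set.Icc (0 : ℤ) (B - 1), (fun x => x + (j : ℝ) • e1) '' T)
    (a₁ a₂ a₃ a₄ a₁' a₂' a₃' a₄' : ℤ)
    (ha₁ : a₁ ∈ Set.Icc (0 : ℤ) (B - 1)) (ha₂ : a₂ ∈ Set.Icc (0 : ℤ) (B - 1))
    (ha₃ : a₃ ∈ Set.Icc (0 : ℤ) (B - 1)) (ha₄ : a₄ ∈ Set.Icc (0 : ℤ) (B - 1))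
    (ha₁' : a₁' ∈ Set.Icc (0 : ℤ) (B - 1)) (ha₂' : a₂' ∈ Set.Icc (0 : ℤ) (B - 1))
    (ha₃' : a₃' ∈ Set.Icc (0 : ℤ) (B - 1)) (ha₄' : a₄' ∈ Set.Icc (0 : ℤ) (B - 1))
    (hd1 : a₁ - a₁' = 1) (hd2 : a₂ - a₂' = A - 1) :
    (subPiece A B T ![a₁, a₂, a₃, a₄] ∩ subPiece A B T ![a₁', a₂', a₃', a₄']).Nonempty ↔
      ((a₃ - a₃' = B - A ∧ a₄ = 0 ∧ a₄' = B - 1) ∨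
       (a₃ - a₃' = B - A + 1 ∧
         (a₄ - a₄' = A - B ∨ a₄ - a₄' = A - B - 1 ∨ a₄ - a₄' = A - B - 2)) ∨
       (a₃ - a₃' = B - A + 2 ∧ a₄ - a₄' = 1)) :=
  subPiece_four_inter_Aminus1_general A B hAB h3 hABne T hTne hTcp hT a₁ a₂ a₃ a₄ a₁' a₂' a₃' a₄'
    ha₄ ha₄' hd1 hd2

end
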